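/- Let $\Theta$ be a compact metric space with distinguished point $\theta^*$, $\mathcal{U}$ a measurable space with probability measure $\mathbb{P}_\mathcal{U}$, and $x^\star : \mathcal{U} \times \Theta \to \mathbb{R}^n$ a map. Suppose that for every $\theta \neq \theta^*$ there exist an open neighborhood $\mathcal{O}_\theta$ of $\theta$ and a measurable set $\mathcal{B}_\theta \subseteq \mathcal{U}$ with $\mathbb{P}_\mathcal{U}(\mathcal{B}_\theta) > 0$ such that $x^\star(u, \theta') \neq x^\star(u, \theta^*)$ for all $\theta' \in \mathcal{O}_\theta$ and all $u \in \mathcal{B}_\theta$. Let $u^1, u^2, \ldots$ be i.i.d. draws from $\mathbb{P}_\mathcal{U}$ and define $\Theta_N^* = \bigcap_{i=1}^N \{\theta \in \Theta : x^\star(u^i, \theta) = x^\star(u^i, \theta^*)\}$. Then almost surely, for every open neighborhood $\mathcal{V}$ of $\theta^*$ there exists $N_0$ such that $\Theta_N^* \subseteq \mathcal{V}$ for all $N \geq N_0$; i.e., $\Theta_N^* \to \{\theta^*\}$ almost surely. -/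

import Mathlib

open MeasureTheory ProbabilityTheory

lemma aux_hit {U : Type*} [MeasurableSpace U] (PU : Measure U) [IsProbabilityMeasure PU]
    {Ω : Type*} [MeasurableSpace Ω] (μ : Measure Ω) [IsProbabilityMeasure μ]
    (u : ℕ → Ω → U) (hmeas : ∀ i, Measurable (u i))
    (hindep : iIndepFun u μ)
    (hlaw : ∀ i, Measure.map (u i) μ = PU)
    {B : Set U} (hB : MeasurableSet B) (hpos : 0 < PU B) :
    ∀ᵐ ω ∂μ, ∃ i, u i ω ∈ B := by
  have hone : ∀ i, μ (u i ⁻¹' Bᶜ) = PU Bᶜ := by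
    intro i
    rw [← hlaw i, Measure.map_apply (hmeas i) hB.compl]
  have key : ∀ N : ℕ, μ (⋂ i ∈ Finset.range N, u i ⁻¹' Bᶜ) = (PU Bᶜ) ^ N := by
    intro N
    rw [hindep.meas_biInter (S := Finset.range N) (s := fun i => u i ⁻¹' Bᶜ)
      (fun i _ => ⟨Bᶜ, hB.compl, rfl⟩)]
    simp only [hone, Finset.prod_const, Finset.card_range]
  have hlt : PU Bᶜ < 1 := by
    rw [measure_compl hB (measure_ne_top _ _)]
    simpa using ENNReal.sub_lt_self (by simp) one_ne_zero hpos.ne'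
  have hzero : μ {ω | ∀ i, u i ω ∉ B} = 0 := by
    have hsub : ∀ N : ℕ, μ {ω | ∀ i, u i ω ∉ B} ≤ (PU Bᶜ) ^ N := by
      intro N
      rw [← key N]
      apply measure_mono
      intro ω hω
      simp only [Set.mem_iInter]
      intro i _
      exact hω i
    have htend : Filter.Tendsto (fun N : ℕ => (PU Bᶜ) ^ N) Filter.atTop (nhds 0) :=
      ENNReal.tendsto_pow_atTop_nhds_zero_of_lt_one hlt
    have := ge_of_tendsto' htend hsub
    simpa using this
  have h2 : {ω | ¬ ∃ i, u i ω ∈ B} = {ω | ∀ i, u i ω ∉ B} := by ext ω; simp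
  exact ae_iff.2 (h2 ▸ hzero)

theorem stmt_0 {Θ : Type*} [MetricSpace Θ] [CompactSpace Θ] (θstar : Θ)
    {U : Type*} [MeasurableSpace U] (PU : Measure U) [IsProbabilityMeasure PU]
    {n : ℕ} (xstar : U → Θ → EuclideanSpace ℝ (Fin n))
    (hid : ∀ θ : Θ, θ ≠ θstar → ∃ (O : Set Θ) (B : Set U),
      IsOpen O ∧ θ ∈ O ∧ MeasurableSet B ∧ 0 < PU B ∧
      ∀ θ' ∈ O, ∀ u ∈ B, xstar u θ' ≠ xstar u θstar)
    {Ω : Type*} [MeasurableSpace Ω] (μ : Measure Ω) [IsProbabilityMeasure μ]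
    (u : ℕ → Ω → U) (hmeas : ∀ i, Measurable (u i))
    (hindep : iIndepFun u μ)
    (hlaw : ∀ i, Measure.map (u i) μ = PU) :
    ∀ᵐ ω ∂μ, ∀ V : Set Θ, IsOpen V → θstar ∈ V →
      ∃ N0 : ℕ, ∀ N ≥ N0,
        {θ : Θ | ∀ i < N, xstar (u i ω) θ = xstar (u i ω) θstar} ⊆ V := by
  -- choose neighborhoods and sets for each θ ≠ θstar
  set S := {θ : Θ // θ ≠ θstar} with hS
  have hid' : ∀ p : S, ∃ (O : Set Θ) (B : Set U),
      IsOpen O ∧ (p : Θ) ∈ O ∧ MeasurableSet B ∧ 0 < PU B ∧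
      ∀ θ' ∈ O, ∀ u ∈ B, xstar u θ' ≠ xstar u θstar := fun p => hid p.1 p.2
  choose O B hOopen hOmem hBmeas hBpos hne using hid'
  -- compact annuli
  set C : ℕ → Set Θ := fun k => (Metric.ball θstar ((k + 1 : ℝ)⁻¹))ᶜ with hC
  have hCcompact : ∀ k, IsCompact (C k) :=
    fun k => (Metric.isOpen_ball.isClosed_compl).isCompact
  -- finite subcovers
  have hcover : ∀ k : ℕ, ∃ t : Finset S, C k ⊆ ⋃ p ∈ t, O p := by
    intro k
    apply (hCcompact k).elim_finite_subcover O hOopen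
    intro θ hθ
    have hθne : θ ≠ θstar := by
      intro h
      apply hθ
      rw [h]
      exact Metric.mem_ball_self (by positivity)
    exact Set.mem_iUnion.2 ⟨⟨θ, hθne⟩, hOmem _⟩
  choose t ht using hcover
  -- a.s. event
  have hae : ∀ᵐ ω ∂μ, ∀ k : ℕ, ∀ p ∈ t k, ∃ i, u i ω ∈ B p := by
    rw [MeasureTheory.ae_all_iff]
    intro k
    rw [Filter.eventually_all_finset]
    intro p _
    exact aux_hit PU μ u hmeas hindep hlaw (hBmeas p) (hBpos p)
  filter_upwards [hae] with ω hω
  intro V hV hVmem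
  obtain ⟨ε, hε, hball⟩ := Metric.isOpen_iff.1 hV θstar hVmem
  obtain ⟨k, hk⟩ := exists_nat_gt ε⁻¹
  have hklt : (k + 1 : ℝ)⁻¹ < ε := by
    rw [inv_lt_comm₀ (by positivity) hε]
    calc ε⁻¹ < k := hk
    _ < k + 1 := by linarith
  choose i hi using hω k
  refine ⟨((t k).attach.sup fun p => i p.1 p.2) + 1, fun N hN θ hθ => ?_⟩
  by_contra hθV
  have hθC : θ ∈ C k := by
    intro hmem
    exact hθV (hball (Metric.mem_ball.2 (lt_trans (Metric.mem_ball.1 hmem) hklt)))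
  obtain ⟨p, hpt, hpO⟩ := Set.mem_iUnion₂.1 (ht k hθC)
  have hiN : i p hpt < N := by
    have : i p hpt ≤ (t k).attach.sup fun p => i p.1 p.2 :=
      Finset.le_sup (f := fun (p : {x // x ∈ t k}) => i p.1 p.2) (Finset.mem_attach _ ⟨p, hpt⟩)
    omega
  exact hne p θ hpO (u (i p hpt) ω) (hi p hpt) (hθ (i p hpt) hiN)
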